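/- arXiv:1005.2217 — 3 statements merged into one kernel-verified Lean document; each statement's English description precedes it below -/
import Mathlib

section
/- Let h(x) = x·log(x) − x + e^{−1/x} for x > 0. Then h is convex on the interval (0, 1/log 2); that is, its second derivative h''(x) = 1/x − (2/x³)e^{−1/x} + (1/x⁴)e^{−1/x} is nonnegative there. -/
/-!
Writing `E = exp (-1/x)`, we have `h'' x = (x ^ 3 - 2 x E + E) / x ^ 4`. For `x ≤ 1/2` the
numerator is clearly nonnegative; otherwise `exp (1/x) ≥ 1 + 1/x` gives `E ≤ x / (x + 1)`, which
reduces its positivity to `x ^ 3 + (x - 1) ^ 2 > 0`. So `h` is in fact convex on all of `(0, ∞)`.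
-/

noncomputable def h (x : ℝ) : ℝ := x * Real.log x - x + Real.exp (-1 / x)

open Real Set

theorem hasDerivAt_exp_neg_one_div {x : ℝ} (hx : x ≠ 0) :
    HasDerivAt (fun y ↦ exp (-1 / y)) (exp (-1 / x) / x ^ 2) x := by
  have hinv : HasDerivAt (fun y : ℝ ↦ -1 / y) (1 / x ^ 2) x :=
    ((hasDerivAt_inv hx).const_mul (-1)).congr_deriv (by ring)
      |>.congr_of_eventuallyEq (.of_forall fun y ↦ by simp [neg_div])
  exact hinv.exp.congr_deriv (by ring)

theorem hasDerivAt_h {x : ℝ} (hx : 0 < x) :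
    HasDerivAt h (log x + exp (-1 / x) / x ^ 2) x := by
  have hlog : HasDerivAt (fun y ↦ y * log y) (log x + 1) x :=
    ((hasDerivAt_id' x).mul (hasDerivAt_log hx.ne')).congr_deriv (by field_simp)
  exact ((hlog.sub (hasDerivAt_id' x)).add (hasDerivAt_exp_neg_one_div hx.ne')).congr_deriv
    (by ring)

theorem hasDerivAt_deriv_h {x : ℝ} (hx : 0 < x) :
    HasDerivAt (fun y ↦ log y + exp (-1 / y) / y ^ 2)
      (1 / x - (2 / x ^ 3) * exp (-1 / x) + (1 / x ^ 4) * exp (-1 / x)) x := by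
  have hsq : HasDerivAt (fun y : ℝ ↦ y ^ 2) (2 * x) x := by simpa using hasDerivAt_pow 2 x
  refine ((hasDerivAt_log hx.ne').add
    ((hasDerivAt_exp_neg_one_div hx.ne').div hsq (pow_ne_zero 2 hx.ne'))).congr_deriv ?_
  field_simp
  ring

theorem exp_neg_one_div_mul_add_one_le {x : ℝ} (hx : 0 < x) : exp (-1 / x) * (x + 1) ≤ x := by
  have hexp : 1 / x + 1 ≤ exp (1 / x) := add_one_le_exp _
  rw [neg_div, exp_neg, inv_mul_le_iff₀ (exp_pos _)]
  calc x + 1 = (1 / x + 1) * x := by field_simp; ring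
    _ ≤ exp (1 / x) * x := by gcongr

theorem deriv2_h_nonneg {x : ℝ} (hx : 0 < x) :
    0 ≤ 1 / x - (2 / x ^ 3) * exp (-1 / x) + (1 / x ^ 4) * exp (-1 / x) := by
  set E := exp (-1 / x)
  have hE : 0 < E := exp_pos _
  have hEle : E * (x + 1) ≤ x := exp_neg_one_div_mul_add_one_le hx
  have hnum : 0 ≤ x ^ 3 - 2 * x * E + E := by
    rcases le_or_gt (2 * x) 1 with hsmall | hlarge
    · nlinarith [pow_pos hx 3]
    · nlinarith [pow_pos hx 3, sq_nonneg (x - 1), mul_pos hx hx]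
  have hform : 1 / x - (2 / x ^ 3) * E + (1 / x ^ 4) * E = (x ^ 3 - 2 * x * E + E) / x ^ 4 := by
    field_simp
  rw [hform]
  positivity

theorem convexOn_h_Ioi : ConvexOn ℝ (Ioi (0 : ℝ)) h := by
  refine convexOn_of_hasDerivWithinAt2_nonneg (f' := fun y ↦ log y + exp (-1 / y) / y ^ 2)
    (f'' := fun y ↦ 1 / y - (2 / y ^ 3) * exp (-1 / y) + (1 / y ^ 4) * exp (-1 / y))
    (convex_Ioi 0) (fun x hx ↦ (hasDerivAt_h hx).continuousAt.continuousWithinAt) ?_ ?_ ?_ <;>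
    rw [interior_Ioi] <;> intro x hx
  · exact (hasDerivAt_h hx).hasDerivWithinAt
  · exact (hasDerivAt_deriv_h hx).hasDerivWithinAt
  · exact deriv2_h_nonneg hx

theorem stmt0 :
    ConvexOn ℝ (Set.Ioo 0 (1 / Real.log 2)) h ∧
    ∀ x ∈ Set.Ioo (0:ℝ) (1 / Real.log 2),
      0 ≤ 1 / x - (2 / x ^ 3) * Real.exp (-1 / x) + (1 / x ^ 4) * Real.exp (-1 / x) :=
  ⟨convexOn_h_Ioi.subset Ioo_subset_Ioi_self (convex_Ioo _ _),
    fun _ hx ↦ deriv2_h_nonneg hx.1⟩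
end

section
/- Let h(x) = x·log(x) − x + e^{−1/x}. Then h(x) ≤ 0 for all x in (0, 1/log 2]. -/
theorem stmt1 : ∀ x ∈ Set.Ioc (0:ℝ) (1 / Real.log 2),
    x * Real.log x - x + Real.exp (-1 / x) ≤ 0 := by
  rintro x ⟨hx0, hx1⟩
  have hlog2 : (0.6931471803:ℝ) < Real.log 2 := Real.log_two_gt_d9
  have hxle : x ≤ 1.45 := by
    calc x ≤ 1 / Real.log 2 := hx1
    _ ≤ 1 / 0.6931471803 := by
        apply one_div_le_one_div_of_le (by norm_num) hlog2.le
    _ ≤ 1.45 := by norm_num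
  -- exp(-1/x) ≤ x/(x+1)
  have h1 : Real.exp (-1 / x) ≤ x / (x + 1) := by
    have hE : (x + 1) / x ≤ Real.exp (1 / x) := by
      have := Real.add_one_le_exp (1 / x)
      calc (x + 1) / x = 1 / x + 1 := by field_simp; ring
        _ ≤ Real.exp (1 / x) := this
    have hpos : (0:ℝ) < (x + 1) / x := by positivity
    have : Real.exp (-1 / x) = (Real.exp (1 / x))⁻¹ := by
      rw [← Real.exp_neg]; ring_nf
    rw [this]
    calc (Real.exp (1 / x))⁻¹ ≤ ((x + 1) / x)⁻¹ := by
          apply inv_anti₀ hpos hE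
      _ = x / (x + 1) := by rw [inv_div]
  have h2 : Real.log x ≤ x - 1 := Real.log_le_sub_one_of_pos hx0
  have hx1pos : (0:ℝ) < x + 1 := by linarith
  have hmul : x * Real.log x ≤ x * (x - 1) :=
    mul_le_mul_of_nonneg_left h2 hx0.le
  have hdiv : x / (x + 1) = x / (x + 1) := rfl
  have hq : x * (x - 1) - x + x / (x + 1) = x * (x ^ 2 - x - 1) / (x + 1) := by
    field_simp; ring
  have hneg : x ^ 2 - x - 1 ≤ 0 := by nlinarith
  have hfin : x * (x ^ 2 - x - 1) / (x + 1) ≤ 0 := by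
    apply div_nonpos_of_nonpos_of_nonneg _ hx1pos.le
    exact mul_nonpos_of_nonneg_of_nonpos hx0.le hneg
  linarith [hmul, h1, hq ▸ hfin]
end

section
/- Let Ψ(v) = (1+v)·log(1+v) − v for v ≥ 0, let p ∈ (0, 1/2] and set a = log(1/p) / (1 − p·log(1/p)). Then p·(1 + 1/(a·p))·log(1 + 1/(a·p)) − 1/a ≤ 1. In particular, writing the left side as E[Ψ(1_B/(a·p))] for an event B of probability p, the Birnbaum–Orlicz norm of 1_B/p with respect to Ψ is at most a. -/
theorem stmt3 (p a : ℝ) (hp : 0 < p) (hp2 : p ≤ 1 / 2)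
    (ha : a = Real.log (1 / p) / (1 - p * Real.log (1 / p))) :
    p * (1 + 1 / (a * p)) * Real.log (1 + 1 / (a * p)) - 1 / a ≤ 1 := by
  set L := Real.log (1 / p) with hLdef
  have h2p : (2 : ℝ) ≤ 1 / p := by rw [le_div_iff₀ hp]; linarith
  have h2L : Real.log 2 ≤ L := Real.log_le_log (by norm_num) h2p
  have hlog2 : (0 : ℝ) < Real.log 2 := Real.log_pos (by norm_num)
  have hL0 : 0 < L := lt_of_lt_of_le hlog2 h2L
  have hlogp : Real.log p = -L := by
    rw [hLdef, one_div, Real.log_inv, neg_neg]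
  have hpe : p = Real.exp (-L) := by rw [← hlogp, Real.exp_log hp]
  have hpL : p * L ≤ Real.exp (-1) := by
    have h1 : L - 1 + 1 ≤ Real.exp (L - 1) := Real.add_one_le_exp (L - 1)
    have h2 : Real.exp (L - 1) = Real.exp L * Real.exp (-1) := by
      rw [← Real.exp_add]; ring_nf
    have h3 : p * Real.exp L = 1 := by
      rw [hpe, ← Real.exp_add]; simp
    nlinarith [Real.exp_pos L, Real.exp_pos (-1), mul_pos hp (Real.exp_pos (-1))]
  have hexp1 : Real.exp (-1) < 1 := by
    calc Real.exp (-1) < Real.exp 0 := Real.exp_lt_exp.mpr (by norm_num)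
    _ = 1 := Real.exp_zero
  have h1pL : p * L < 1 := lt_of_le_of_lt hpL hexp1
  have hden : 0 < 1 - p * L := by linarith
  have ha0 : 0 < a := by rw [ha]; exact div_pos hL0 hden
  have hp' : p ≠ 0 := ne_of_gt hp
  have hL' : L ≠ 0 := ne_of_gt hL0
  have hden' : (1 : ℝ) - p * L ≠ 0 := ne_of_gt hden
  -- simplify 1 + 1/(a*p) = 1/(p*L)
  have hkey1 : 1 + 1 / (a * p) = 1 / (p * L) := by
    rw [ha]; field_simp; ring
  have hinva : 1 / a = (1 - p * L) / L := by
    rw [ha, one_div_div]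
  have hlogval : Real.log (1 / (p * L)) = L - Real.log L := by
    rw [one_div, Real.log_inv, Real.log_mul hp' hL', hlogp]; ring
  -- key inequality: p*L ≤ 1 + log L
  have hlogL : 1 - 1 / L ≤ Real.log L := by
    have h := Real.log_le_sub_one_of_pos (show (0:ℝ) < 1 / L by positivity)
    rw [one_div, Real.log_inv] at h
    rw [one_div]
    linarith
  have hLinv : 1 / L ≤ 1 / Real.log 2 := one_div_le_one_div_of_le hlog2 h2L
  have hnum : Real.exp (-1) ≤ 2 - 1 / Real.log 2 := by
    have he : (2.7182818283 : ℝ) < Real.exp 1 := Real.exp_one_gt_d9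
    have hl : (0.6931471803 : ℝ) < Real.log 2 := Real.log_two_gt_d9
    have hexpinv : Real.exp (-1) = 1 / Real.exp 1 := by
      rw [Real.exp_neg, one_div]
    rw [hexpinv]
    have h1 : 1 / Real.exp 1 ≤ 1 / (2.7182818283 : ℝ) :=
      one_div_le_one_div_of_le (by norm_num) he.le
    have h2 : 1 / Real.log 2 ≤ 1 / (0.6931471803 : ℝ) :=
      one_div_le_one_div_of_le (by norm_num) hl.le
    have : (1 / (2.7182818283 : ℝ)) ≤ 2 - 1 / (0.6931471803 : ℝ) := by norm_num
    linarith
  have key : p * L ≤ 1 + Real.log L := by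
    have : p * L ≤ 2 - 1 / L := by linarith
    linarith
  rw [hkey1, hlogval, hinva]
  rw [show p * (1 / (p * L)) * (L - Real.log L) = (L - Real.log L) / L by
    field_simp]
  rw [div_sub_div_same, div_le_one hL0]
  linarith
end
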